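/- arXiv:1204.4571 — 2 statements merged into one kernel-verified Lean document; each statement's English description precedes it below -/
import Mathlib

section
/- There exists a constant c = c(n,k) such that for any differentiable f : B₁ᵏ → ℝ^{n-k}, the orthogonal projection S onto the tangent plane of graph f at a point satisfies |S - Σ_{j=1}^k f_j ⊗ f_j| ≤ c|∇f|², where f_j = (e_j, ∂f/∂x_j) and ⊗ denotes the tensor (outer) product of vectors. -/
/-!
Let `F` be the matrix with columns `f_j` and `D = ∇f`. The Gram matrix of the `f_j` is
`G = FᵀF = 1 + DᵀD`, so `S = F G⁻¹ Fᵀ` and `S - Σ f_j ⊗ f_j = F (G⁻¹ - 1) Fᵀ = -F G⁻¹ DᵀD Fᵀ`.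
Since `|y| ≤ |G y|`, every column of `G⁻¹` has length at most one, so `|G⁻¹| ≤ √k`, and
submultiplicativity of the Frobenius norm gives the bound `(k + |D|²) √k |D|²`.
-/

open Matrix Submodule
open scoped RealInnerProductSpace Matrix.Norms.Frobenius

theorem Submodule.starProjection_span_range_eq_sum {ι E : Type*} [Fintype ι] [DecidableEq ι]
    [NormedAddCommGroup E] [InnerProductSpace ℝ E] (v : ι → E)
    [(span ℝ (Set.range v)).HasOrthogonalProjection] (hv : IsUnit (gram ℝ v).det) (w : E) :
    (span ℝ (Set.range v)).starProjection w =
      ∑ j, ((gram ℝ v)⁻¹ *ᵥ fun l => ⟪v l, w⟫) j • v j := by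
  set c := (gram ℝ v)⁻¹ *ᵥ fun l => ⟪v l, w⟫
  have hc : c ᵥ* gram ℝ v = fun l => ⟪v l, w⟫ := by
    conv_lhs => rw [← (isHermitian_gram (𝕜 := ℝ) v).eq, conjTranspose_eq_transpose_of_trivial,
      vecMul_transpose, mulVec_mulVec, mul_nonsing_inv _ hv, one_mulVec]
  refine eq_starProjection_of_mem_of_inner_eq_zero
    (sum_mem fun j _ => smul_mem _ _ (subset_span ⟨j, rfl⟩)) fun u hu => ?_
  induction hu using span_induction with
  | mem _ hu =>
    obtain ⟨l, rfl⟩ := hu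
    rw [inner_sub_left, sub_eq_zero, sum_inner, real_inner_comm]
    simpa [vecMul, dotProduct, real_inner_smul_left, gram_apply] using (congrFun hc l).symm
  | zero => simp
  | add _ _ _ _ h₁ h₂ => rw [inner_add_right, h₁, h₂, add_zero]
  | smul _ _ _ h => rw [real_inner_smul_right, h, mul_zero]

namespace Matrix

variable {m n : Type*} [Fintype m] [Fintype n]

theorem PosSemidef.isUnit_det_one_add [DecidableEq n] {A : Matrix n n ℝ} (hA : A.PosSemidef) :
    IsUnit (1 + A).det :=
  (PosDef.one.add_posSemidef hA).det_pos.ne'.isUnit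

theorem frobenius_norm_eq_sqrt (A : Matrix m n ℝ) : ‖A‖ = √(∑ i, ∑ j, A i j ^ 2) := by
  simp [frobenius_norm_def, Real.sqrt_eq_rpow]

theorem dotProduct_self_le_of_posSemidef [DecidableEq n] {A : Matrix n n ℝ} (hA : A.PosSemidef)
    (y : n → ℝ) :
    y ⬝ᵥ y ≤ ((1 + A) *ᵥ y) ⬝ᵥ ((1 + A) *ᵥ y) := by
  have hAy : 0 ≤ y ⬝ᵥ (A *ᵥ y) := by simpa using hA.dotProduct_mulVec_nonneg y
  have hAA : 0 ≤ (A *ᵥ y) ⬝ᵥ (A *ᵥ y) := by simpa using dotProduct_star_self_nonneg (A *ᵥ y)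
  have hsymm : (A *ᵥ y) ⬝ᵥ y = y ⬝ᵥ (A *ᵥ y) := dotProduct_comm _ _
  simp only [add_mulVec, one_mulVec, add_dotProduct, dotProduct_add]
  linarith

theorem frobenius_norm_inv_one_add_le [DecidableEq n] {A : Matrix n n ℝ} (hA : A.PosSemidef) :
    ‖(1 + A)⁻¹‖ ≤ √(Fintype.card n) := by
  have hdet := hA.isUnit_det_one_add
  have hcol (q : n) : ∑ p, (1 + A)⁻¹ p q ^ 2 ≤ 1 := by
    have h := dotProduct_self_le_of_posSemidef hA ((1 + A)⁻¹ *ᵥ Pi.single q 1)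
    rw [mulVec_mulVec, mul_nonsing_inv _ hdet, one_mulVec] at h
    simpa [dotProduct, sq, Pi.single_apply] using h
  rw [frobenius_norm_eq_sqrt, Finset.sum_comm]
  gcongr
  simpa using Finset.sum_le_sum fun q (_ : q ∈ Finset.univ) => hcol q

theorem frobenius_norm_mul_inv_one_add_sub_one_mul_le [DecidableEq n] (F : Matrix m n ℝ)
    {A : Matrix n n ℝ} (hA : A.PosSemidef) :
    ‖F * ((1 + A)⁻¹ - 1) * Fᵀ‖ ≤ ‖F‖ ^ 2 * √(Fintype.card n) * ‖A‖ := by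
  have hdet := hA.isUnit_det_one_add
  have hsub : (1 + A)⁻¹ - 1 = -((1 + A)⁻¹ * A) := by
    calc (1 + A)⁻¹ - 1 = (1 + A)⁻¹ - (1 + A)⁻¹ * (1 + A) := by rw [nonsing_inv_mul _ hdet]
      _ = -((1 + A)⁻¹ * A) := by rw [mul_add, mul_one]; abel
  calc ‖F * ((1 + A)⁻¹ - 1) * Fᵀ‖ ≤ ‖F‖ * (‖(1 + A)⁻¹‖ * ‖A‖) * ‖Fᵀ‖ := by
        rw [hsub, Matrix.mul_neg, Matrix.neg_mul, norm_neg]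
        grw [frobenius_norm_mul, frobenius_norm_mul, frobenius_norm_mul]
    _ ≤ ‖F‖ * (√(Fintype.card n) * ‖A‖) * ‖F‖ := by
        rw [frobenius_norm_transpose]
        grw [frobenius_norm_inv_one_add_le hA]
    _ = ‖F‖ ^ 2 * √(Fintype.card n) * ‖A‖ := by ring

end Matrix

namespace EuclideanSpace

variable {ι n : Type*} [Fintype n]

def colMatrix (v : ι → EuclideanSpace ℝ n) : Matrix n ι ℝ := Matrix.of fun i j => v j i

theorem gram_eq_colMatrix_transpose_mul (v : ι → EuclideanSpace ℝ n) :
    gram ℝ v = (colMatrix v)ᵀ * colMatrix v := by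
  ext j l
  simp [gram_apply, colMatrix, mul_apply, inner_eq_star_dotProduct, dotProduct, mul_comm]

theorem starProjection_span_range_single_apply_sub [Fintype ι] [DecidableEq ι] [DecidableEq n]
    (v : ι → EuclideanSpace ℝ n) (hv : IsUnit (gram ℝ v).det) (i i' : n) :
    (span ℝ (Set.range v)).starProjection (single i' 1) i - ∑ j, v j i * v j i' =
      (colMatrix v * ((gram ℝ v)⁻¹ - 1) * (colMatrix v)ᵀ : Matrix n n ℝ) i i' := by
  rw [starProjection_span_range_eq_sum v hv, Matrix.mul_sub, Matrix.sub_mul, Matrix.mul_one,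
    Matrix.sub_apply]
  simp only [mulVec, dotProduct, inner_single_right, Real.ringHom_apply, one_mul, mul_comm,
    WithLp.ofLp_sum, WithLp.ofLp_smul, Finset.sum_apply, Pi.smul_apply, smul_eq_mul,
    Finset.mul_sum, colMatrix, mul_apply, of_apply, transpose_apply, sub_left_inj]
  rw [Finset.sum_comm]
  exact Finset.sum_congr rfl fun _ _ => Finset.sum_congr rfl fun _ _ => by ring

end EuclideanSpace

section GraphTangent

variable {k m : ℕ}

/-- The paper's `f_j = (e_j, ∂f/∂x_j)` when `D` is the Jacobian of `f`. -/
def graphTangent (D : Matrix (Fin m) (Fin k) ℝ) (j : Fin k) : EuclideanSpace ℝ (Fin (k + m)) :=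
  WithLp.toLp 2 (Fin.addCases (fun j' => if j' = j then (1 : ℝ) else 0) (fun l => D l j))

theorem gram_graphTangent (D : Matrix (Fin m) (Fin k) ℝ) :
    gram ℝ (graphTangent D) = 1 + Dᵀ * D := by
  rw [EuclideanSpace.gram_eq_colMatrix_transpose_mul]
  ext j l
  simp [EuclideanSpace.colMatrix, graphTangent, mul_apply, Fin.sum_univ_add, one_apply, eq_comm]

theorem norm_colMatrix_graphTangent_sq (D : Matrix (Fin m) (Fin k) ℝ) :
    ‖EuclideanSpace.colMatrix (graphTangent D)‖ ^ 2 = k + ‖D‖ ^ 2 := by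
  rw [frobenius_norm_eq_sqrt, frobenius_norm_eq_sqrt, Real.sq_sqrt (by positivity),
    Real.sq_sqrt (by positivity)]
  simp [EuclideanSpace.colMatrix, graphTangent, Fin.sum_univ_add]

end GraphTangent

theorem projection_tensor_approximation_general (k m : ℕ) :
    ∃ c : ℝ, ∀ (f : (Fin k → ℝ) → Fin m → ℝ)
      (Df : (Fin k → ℝ) → Fin m → Fin k → ℝ)
      (x : Fin k → ℝ), ∑ j, (x j) ^ 2 < 1 →
      (∀ (z : Fin k → ℝ), ∑ j, (z j) ^ 2 < 1 → ∀ (l : Fin m) (j : Fin k),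
        HasDerivAt (fun s => f (Function.update z j s) l) (Df z l j) (z j)) →
      (∑ l, ∑ j, (Df x l j) ^ 2 ≤ 1) →
      ∀ (fvec : Fin k → EuclideanSpace ℝ (Fin (k + m))),
      (∀ j i, fvec j i = Fin.addCases (fun j' => if j' = j then (1:ℝ) else 0)
        (fun l' => Df x l' j) i) →
      Real.sqrt (∑ i, ∑ i',
        ((Submodule.orthogonalProjectionOnto (Submodule.span ℝ (Set.range fvec))
            (EuclideanSpace.single i' (1:ℝ)) : EuclideanSpace ℝ (Fin (k + m))) i
          - ∑ j, fvec j i * fvec j i') ^ 2)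
        ≤ c * (∑ l, ∑ j, (Df x l j) ^ 2) := by
  refine ⟨(k + 1) * √k, fun f Df x _ _ hDf fvec hfvec => ?_⟩
  set D : Matrix (Fin m) (Fin k) ℝ := Matrix.of (Df x)
  obtain rfl : fvec = graphTangent D := funext fun j => PiLp.ext (hfvec j)
  have hD : ∑ l, ∑ j, Df x l j ^ 2 = ‖D‖ ^ 2 := by
    rw [frobenius_norm_eq_sqrt, Real.sq_sqrt (by positivity)]
    rfl
  have hA : (Dᵀ * D).PosSemidef := by
    simpa using posSemidef_conjTranspose_mul_self D
  have hdet : IsUnit (gram ℝ (graphTangent D)).det := gram_graphTangent D ▸ hA.isUnit_det_one_add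
  simp_rw [coe_orthogonalProjectionOnto_apply,
    EuclideanSpace.starProjection_span_range_single_apply_sub _ hdet, ← frobenius_norm_eq_sqrt,
    gram_graphTangent, hD]
  calc _ ≤ ‖EuclideanSpace.colMatrix (graphTangent D)‖ ^ 2 * √k * ‖Dᵀ * D‖ :=
        frobenius_norm_mul_inv_one_add_sub_one_mul_le _ hA |>.trans_eq (by simp)
    _ ≤ (k + ‖D‖ ^ 2) * √k * ‖D‖ ^ 2 := by
        rw [norm_colMatrix_graphTangent_sq]
        grw [frobenius_norm_mul, frobenius_norm_transpose, ← sq]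
    _ ≤ (k + 1) * √k * ‖D‖ ^ 2 := by
        gcongr
        exact hD ▸ hDf

/-- There is `c = c(n,k)` such that for a differentiable `f : B₁ᵏ → ℝ^{n-k}` with
`|∇f| ≤ 1`, the orthogonal projection `S` onto the tangent plane of the graph satisfies
`|S - Σⱼ fⱼ ⊗ fⱼ| ≤ c |∇f|²` (Frobenius norm), where `fⱼ = (eⱼ, ∂f/∂xⱼ)`. -/
theorem projection_tensor_approximation (k m : ℕ) (hk : 0 < k) (hm : 0 < m) :
    ∃ c : ℝ, ∀ (f : (Fin k → ℝ) → Fin m → ℝ)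
      (Df : (Fin k → ℝ) → Fin m → Fin k → ℝ)
      (x : Fin k → ℝ), ∑ j, (x j) ^ 2 < 1 →
      (∀ (z : Fin k → ℝ), ∑ j, (z j) ^ 2 < 1 → ∀ (l : Fin m) (j : Fin k),
        HasDerivAt (fun s => f (Function.update z j s) l) (Df z l j) (z j)) →
      (∑ l, ∑ j, (Df x l j) ^ 2 ≤ 1) →
      ∀ (fvec : Fin k → EuclideanSpace ℝ (Fin (k + m))),
      (∀ j i, fvec j i = Fin.addCases (fun j' => if j' = j then (1:ℝ) else 0)
        (fun l' => Df x l' j) i) →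
      Real.sqrt (∑ i, ∑ i',
        ((Submodule.orthogonalProjectionOnto (Submodule.span ℝ (Set.range fvec))
            (EuclideanSpace.single i' (1:ℝ)) : EuclideanSpace ℝ (Fin (k + m))) i
          - ∑ j, fvec j i * fvec j i') ^ 2)
        ≤ c * (∑ l, ∑ j, (Df x l j) ^ 2) :=
  projection_tensor_approximation_general k m
end

section
/- There exists c₁ = c₁(n,k) with the following property. Let f : B₁ᵏ × (−1,1) → ℝ^{n−k} have continuous spatial gradient with |∇f| ≤ 1, let g ∈ ℱ, and for (x,t) let S be the tangent plane to graph f(·,t) at (x,f(x,t)). Then, evaluating at (x,f(x,t)): ∂Q_g/∂t − S·∇²Q_g ≤ c₁ Q_g^{1/2} |∇f|² |∇²g| − (1/(4k))|∇f − ∇g|² − (1/2)Σ_{l=k+1}^n |S(g_l)|², where g_l = (∂g_l/∂x₁,...,∂g_l/∂x_k,0,...,−1,...,0) with −1 in the l-th slot. -/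
/-!
Write `u_l = x_l - g_l`, so that `Q = ½ Σ_l u_l²` with every `u_l` a quadratic polynomial.
Then `∂_t Q = -Σ_l u_l b_l` and `∇²Q = Σ_l (∇u_l ⊗ ∇u_l + u_l ∇²u_l)`, where `∇u_l = -𝐠_l` and
`∇²u_l` is `-∇²g_l` in the spatial block. Traced against the projection `P` onto `S`, the first
part gives `Σ_l |P 𝐠_l|²`; as `b_l = tr ∇²g_l`, the second cancels `∂_t Q` up to
`Σ_l u_l Σ_{j,j'} (∇²g_l)_{jj'} ⟨(I-P)e_j, (I-P)e_{j'}⟩`. The tangent vectors `f_j = e_j + ∂_j f`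
lie in `S`, so `|(I-P)e_j| ≤ |∂_j f|`, and Cauchy–Schwarz bounds that error term by
`√2 Q^{1/2} |∇f|² |∇²g|`. Finally `⟨P 𝐠_l, f_j⟩ = ∂_j g_l - ∂_j f_l` and `|f_j|² ≤ 2` give
`|∇f - ∇g|² ≤ 2k Σ_l |P 𝐠_l|²`, so half of `Σ_l |P 𝐠_l|²` pays for the term `(1/4k)|∇f - ∇g|²`.
-/

open Function Finset
open scoped RealInnerProductSpace

lemma hasDerivAt_quadratic_sub (p q r s₀ : ℝ) :
    HasDerivAt (fun s => p + (s - s₀) * q + (s - s₀) ^ 2 / 2 * r) q s₀ := by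
  have h : HasDerivAt (fun s : ℝ => s - s₀) 1 s₀ := (hasDerivAt_id s₀).sub_const s₀
  simpa using ((h.mul_const q).const_add p).fun_add (((h.fun_pow 2).div_const 2).mul_const r)

section QuadraticPolynomial

variable {ι : Type*}

lemma update_apply_eq_add_ite [DecidableEq ι] (Y : ι → ℝ) (i : ι) (s : ℝ) (j : ι) :
    update Y i s j = Y j + if j = i then s - Y i else 0 := by
  by_cases h : j = i <;> simp [h]

noncomputable def partialDeriv [DecidableEq ι] (F : (ι → ℝ) → ℝ) (i : ι) (Y : ι → ℝ) : ℝ :=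
  deriv (fun s => F (update Y i s)) (Y i)

variable [Fintype ι]

noncomputable def quadPoly (c₀ : ℝ) (c : ι → ℝ) (H : Matrix ι ι ℝ) (Y : ι → ℝ) : ℝ :=
  c₀ + ∑ i, c i * Y i + 1 / 2 * ∑ i, ∑ j, H i j * Y i * Y j

def quadGrad (c : ι → ℝ) (H : Matrix ι ι ℝ) (Y : ι → ℝ) (i : ι) : ℝ :=
  c i + ∑ j, H i j * Y j

variable {κ : Type*} [Fintype κ] {c₀ : κ → ℝ} {c : κ → ι → ℝ} {H : κ → Matrix ι ι ℝ}

lemma hasDerivAt_half_sum_sq_quadPoly_sub (b : κ → ℝ) (Y : ι → ℝ) (t : ℝ) :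
    HasDerivAt (fun τ => 1 / 2 * ∑ l, quadPoly (c₀ l - b l * τ) (c l) (H l) Y ^ 2)
      (-∑ l, quadPoly (c₀ l - b l * t) (c l) (H l) Y * b l) t := by
  have hshift : ∀ l τ, quadPoly (c₀ l - b l * τ) (c l) (H l) Y
      = quadPoly (c₀ l) (c l) (H l) Y - b l * τ := fun l τ => by simp only [quadPoly]; ring
  simp only [hshift]
  refine ((HasDerivAt.fun_sum fun l _ => (((hasDerivAt_id t).const_mul (b l)).const_sub
    (quadPoly (c₀ l) (c l) (H l) Y)).fun_pow 2).const_mul (1 / 2 : ℝ)).congr_deriv ?_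
  simp only [mul_sum, ← sum_neg_distrib]
  exact sum_congr rfl fun l _ => by simp; ring

variable [DecidableEq ι]

lemma quadPoly_update (c₀ : ℝ) (c : ι → ℝ) {H : Matrix ι ι ℝ} (hH : H.IsSymm) (Y : ι → ℝ)
    (i : ι) (s : ℝ) :
    quadPoly c₀ c H (update Y i s)
      = quadPoly c₀ c H Y + (s - Y i) * quadGrad c H Y i + (s - Y i) ^ 2 / 2 * H i i := by
  have hcol : ∑ j, H j i * Y j = ∑ j, H i j * Y j := by
    simp only [← hH.apply i]
  have hrow : ∑ j, H i j * (s - Y i) * Y j = (s - Y i) * ∑ j, H i j * Y j := by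
    rw [mul_sum]; exact sum_congr rfl fun j _ => by ring
  simp only [quadPoly, quadGrad, update_apply_eq_add_ite, mul_add, add_mul, mul_ite, ite_mul,
    mul_zero, zero_mul, sum_add_distrib, sum_ite_irrel, sum_const_zero, sum_ite_eq', mem_univ,
    if_true, ← sum_mul, hcol, hrow]
  ring

lemma quadGrad_update (c : ι → ℝ) (H : Matrix ι ι ℝ) (Y : ι → ℝ) (i : ι) (s : ℝ) (i' : ι) :
    quadGrad c H (update Y i s) i' = quadGrad c H Y i' + (s - Y i) * H i' i := by
  simp only [quadGrad, update_apply_eq_add_ite, mul_add, mul_ite, mul_zero, sum_add_distrib,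
    sum_ite_eq', mem_univ, if_true]
  ring

lemma partialDeriv_half_sum_sq (hH : ∀ l, (H l).IsSymm) (i : ι) :
    partialDeriv (fun Y => 1 / 2 * ∑ l, quadPoly (c₀ l) (c l) (H l) Y ^ 2) i
      = fun Y => ∑ l, quadPoly (c₀ l) (c l) (H l) Y * quadGrad (c l) (H l) Y i := by
  funext Y
  simp only [partialDeriv, quadPoly_update _ _ (hH _)]
  refine HasDerivAt.deriv ?_
  refine ((HasDerivAt.fun_sum fun l _ => (hasDerivAt_quadratic_sub (quadPoly (c₀ l) (c l) (H l) Y)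
    (quadGrad (c l) (H l) Y i) (H l i i) (Y i)).fun_pow 2).const_mul (1 / 2 : ℝ)).congr_deriv ?_
  rw [mul_sum]
  exact sum_congr rfl fun l _ => by simp; ring

lemma partialDeriv_partialDeriv_half_sum_sq (hH : ∀ l, (H l).IsSymm) (i i' : ι)
    (Y : ι → ℝ) :
    partialDeriv (partialDeriv (fun Y => 1 / 2 * ∑ l, quadPoly (c₀ l) (c l) (H l) Y ^ 2) i') i Y
      = ∑ l, (quadGrad (c l) (H l) Y i * quadGrad (c l) (H l) Y i'
          + quadPoly (c₀ l) (c l) (H l) Y * H l i' i) := by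
  rw [partialDeriv_half_sum_sq hH]
  simp only [partialDeriv, quadPoly_update _ _ (hH _), quadGrad_update]
  refine HasDerivAt.deriv (HasDerivAt.fun_sum fun l _ => ?_)
  have hlin : HasDerivAt (fun s => quadGrad (c l) (H l) Y i' + (s - Y i) * H l i' i)
      (H l i' i) (Y i) := by
    simpa using (((hasDerivAt_id (Y i)).sub_const (Y i)).mul_const (H l i' i)).const_add
      (quadGrad (c l) (H l) Y i')
  refine ((hasDerivAt_quadratic_sub (quadPoly (c₀ l) (c l) (H l) Y) (quadGrad (c l) (H l) Y i)
    (H l i i) (Y i)).fun_mul hlin).congr_deriv ?_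
  simp

end QuadraticPolynomial

section Projection

variable {E : Type*} [NormedAddCommGroup E] [InnerProductSpace ℝ E]
  (K : Submodule ℝ E) [K.HasOrthogonalProjection]

lemma inner_starProjection_left_eq_sub (u v : E) :
    ⟪K.starProjection u, v⟫ = ⟪u, v⟫ - ⟪Kᗮ.starProjection u, Kᗮ.starProjection v⟫ := by
  have horth : ⟪u - K.starProjection u, K.starProjection v⟫ = 0 :=
    K.starProjection_inner_eq_zero u _ (K.starProjection_apply_mem v)
  rw [Submodule.starProjection_orthogonal_val, Submodule.starProjection_orthogonal_val,
    inner_sub_right, horth, inner_sub_left]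
  ring

lemma norm_starProjection_orthogonal_le {f : E} (hf : f ∈ K) (v : E) :
    ‖Kᗮ.starProjection v‖ ≤ ‖v - f‖ := by
  have hf0 : Kᗮ.starProjection f = 0 :=
    Kᗮ.starProjection_apply_eq_zero_iff.mpr (K.le_orthogonal_orthogonal hf)
  calc ‖Kᗮ.starProjection v‖ = ‖Kᗮ.starProjection (v - f)‖ := by rw [map_sub, hf0, sub_zero]
    _ ≤ ‖v - f‖ := Kᗮ.norm_starProjection_apply_le _

lemma inner_sq_le_norm_starProjection_sq_mul {f : E} (hf : f ∈ K) (v : E) :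
    ⟪v, f⟫ ^ 2 ≤ ‖K.starProjection v‖ ^ 2 * ‖f‖ ^ 2 := by
  rw [← K.starProjection_eq_self_iff.mpr hf, ← K.inner_starProjection_left_eq_right,
    K.starProjection_eq_self_iff.mpr hf, ← mul_pow, ← sq_abs]
  exact pow_le_pow_left₀ (abs_nonneg _) (abs_real_inner_le_norm _ _) 2

lemma inv_four_mul_sum_sum_inner_sq_le {κ : Type*} [Fintype κ] {k : ℕ} {f : Fin k → E}
    (hfK : ∀ j, f j ∈ K) (hf : ∀ j, ‖f j‖ ^ 2 ≤ 2) (v : κ → E) :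
    1 / (4 * k) * ∑ l, ∑ j, ⟪v l, f j⟫ ^ 2 ≤ 1 / 2 * ∑ l, ‖K.starProjection (v l)‖ ^ 2 := by
  have hterm : ∀ l j, ⟪v l, f j⟫ ^ 2 ≤ 2 * ‖K.starProjection (v l)‖ ^ 2 := fun l j =>
    (inner_sq_le_norm_starProjection_sq_mul K (hfK j) (v l)).trans
      (by nlinarith [hf j, sq_nonneg ‖K.starProjection (v l)‖])
  have hsum : ∑ l, ∑ j, ⟪v l, f j⟫ ^ 2 ≤ 2 * k * ∑ l, ‖K.starProjection (v l)‖ ^ 2 := by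
    rw [mul_sum]
    refine sum_le_sum fun l _ => (sum_le_sum fun j _ => hterm l j).trans_eq ?_
    simp; ring
  rcases k.eq_zero_or_pos with rfl | hk
  · simp only [Nat.cast_zero, mul_zero, div_zero, zero_mul]; positivity
  · calc _ ≤ 1 / (4 * k) * (2 * k * ∑ l, ‖K.starProjection (v l)‖ ^ 2) := by gcongr
      _ = _ := by field_simp; ring

end Projection

section InnerSums

variable {E : Type*} [NormedAddCommGroup E] [InnerProductSpace ℝ E]

lemma abs_sum_sum_mul_inner_le {κ : Type*} [Fintype κ] (N : κ → κ → ℝ) (w : κ → E) :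
    |∑ j, ∑ j', N j j' * ⟪w j, w j'⟫| ≤ √(∑ j, ∑ j', N j j' ^ 2) * ∑ j, ‖w j‖ ^ 2 := by
  have hgram : ∑ j, ∑ j', ⟪w j, w j'⟫ ^ 2 ≤ (∑ j, ‖w j‖ ^ 2) ^ 2 := by
    rw [sq (∑ j, ‖w j‖ ^ 2), sum_mul_sum]
    refine sum_le_sum fun j _ => sum_le_sum fun j' _ => ?_
    rw [← mul_pow, ← sq_abs]
    exact pow_le_pow_left₀ (abs_nonneg _) (abs_real_inner_le_norm _ _) 2
  calc |∑ j, ∑ j', N j j' * ⟪w j, w j'⟫|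
      = |∑ p : κ × κ, N p.1 p.2 * ⟪w p.1, w p.2⟫| := by
        rw [← univ_product_univ, sum_product]
    _ ≤ ∑ p : κ × κ, |N p.1 p.2| * |⟪w p.1, w p.2⟫| :=
        (abs_sum_le_sum_abs _ _).trans_eq (by simp only [abs_mul])
    _ ≤ √(∑ p : κ × κ, |N p.1 p.2| ^ 2) * √(∑ p : κ × κ, |⟪w p.1, w p.2⟫| ^ 2) :=
        Real.sum_mul_le_sqrt_mul_sqrt _ _ _
    _ ≤ √(∑ j, ∑ j', N j j' ^ 2) * ∑ j, ‖w j‖ ^ 2 := by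
        simp only [← univ_product_univ, sum_product, sq_abs]
        gcongr
        exact (Real.sqrt_le_sqrt hgram).trans_eq (Real.sqrt_sq (by positivity))

lemma abs_sum_mul_sum_sum_mul_inner_le {κ ι : Type*} [Fintype κ] [Fintype ι] (u : κ → ℝ)
    (N : κ → ι → ι → ℝ) (w : ι → E) :
    |∑ l, u l * ∑ j, ∑ j', N l j j' * ⟪w j, w j'⟫|
      ≤ √(∑ l, u l ^ 2) * √(∑ l, ∑ j, ∑ j', N l j j' ^ 2) * ∑ j, ‖w j‖ ^ 2 := by
  have hw : 0 ≤ ∑ j, ‖w j‖ ^ 2 := by positivity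
  calc |∑ l, u l * ∑ j, ∑ j', N l j j' * ⟪w j, w j'⟫|
      ≤ ∑ l, |u l| * (√(∑ j, ∑ j', N l j j' ^ 2) * ∑ j, ‖w j‖ ^ 2) :=
        (abs_sum_le_sum_abs _ _).trans (sum_le_sum fun l _ => by
          rw [abs_mul]
          exact mul_le_mul_of_nonneg_left (abs_sum_sum_mul_inner_le _ _) (abs_nonneg _))
    _ = (∑ l, |u l| * √(∑ j, ∑ j', N l j j' ^ 2)) * ∑ j, ‖w j‖ ^ 2 := by
        rw [sum_mul]; exact sum_congr rfl fun l _ => by ring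
    _ ≤ √(∑ l, |u l| ^ 2) * √(∑ l, √(∑ j, ∑ j', N l j j' ^ 2) ^ 2) * ∑ j, ‖w j‖ ^ 2 :=
        mul_le_mul_of_nonneg_right (Real.sum_mul_le_sqrt_mul_sqrt _ _ _) hw
    _ = _ := by
        simp only [sq_abs]
        congr 3
        exact sum_congr rfl fun l _ => Real.sq_sqrt (by positivity)

end InnerSums

section EuclideanProjection

variable {ι : Type*} [Fintype ι] [DecidableEq ι] (K : Submodule ℝ (EuclideanSpace ℝ ι))

lemma starProjection_single_apply (i i' : ι) :
    K.starProjection (EuclideanSpace.single i' 1) i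
      = (if i = i' then 1 else 0) - ⟪Kᗮ.starProjection (EuclideanSpace.single i' 1),
          Kᗮ.starProjection (EuclideanSpace.single i 1)⟫ := by
  have h := inner_starProjection_left_eq_sub K (EuclideanSpace.single i' 1)
    (EuclideanSpace.single i 1)
  simp only [EuclideanSpace.inner_single_right, PiLp.single_apply] at h
  simpa using h

lemma sum_sum_mul_starProjection_single (v : EuclideanSpace ℝ ι) :
    ∑ i, ∑ i', v i * v i' * K.starProjection (EuclideanSpace.single i' 1) i
      = ‖K.starProjection v‖ ^ 2 := by
  have hrow : ∀ i', ∑ i, v i * K.starProjection (EuclideanSpace.single i' 1) i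
      = K.starProjection v i' := by
    intro i'
    calc _ = ⟪v, K.starProjection (EuclideanSpace.single i' 1)⟫ := by
          simp [PiLp.inner_apply, mul_comm]
      _ = ⟪K.starProjection v, EuclideanSpace.single i' 1⟫ :=
          (K.inner_starProjection_left_eq_right _ _).symm
      _ = _ := by simp [EuclideanSpace.inner_single_right]
  calc _ = ∑ i', v i' * K.starProjection v i' := by
        rw [sum_comm]
        refine sum_congr rfl fun i' _ => ?_
        rw [← hrow, mul_sum]
        exact sum_congr rfl fun i _ => by ring
    _ = ⟪K.starProjection v, v⟫ := by simp [PiLp.inner_apply]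
    _ = _ := by simpa using K.re_inner_starProjection_eq_normSq v

lemma sum_sum_partialDeriv_mul_starProjection_single {κ : Type*} [Fintype κ] {c₀ : κ → ℝ}
    {c : κ → ι → ℝ} {H : κ → Matrix ι ι ℝ} (hH : ∀ l, (H l).IsSymm) (Y : ι → ℝ) :
    ∑ i, ∑ i', partialDeriv (partialDeriv
        (fun Y => 1 / 2 * ∑ l, quadPoly (c₀ l) (c l) (H l) Y ^ 2) i') i Y
        * K.starProjection (EuclideanSpace.single i' 1) i
      = ∑ l, ‖K.starProjection (WithLp.toLp 2 (quadGrad (c l) (H l) Y))‖ ^ 2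
        + ∑ l, quadPoly (c₀ l) (c l) (H l) Y
          * ∑ i, ∑ i', H l i' i * K.starProjection (EuclideanSpace.single i' 1) i := by
  have hrank : ∀ l, ∑ i, ∑ i', quadGrad (c l) (H l) Y i * quadGrad (c l) (H l) Y i'
      * K.starProjection (EuclideanSpace.single i' 1) i
      = ‖K.starProjection (WithLp.toLp 2 (quadGrad (c l) (H l) Y))‖ ^ 2 := fun l => by
    simpa using sum_sum_mul_starProjection_single K (WithLp.toLp 2 (quadGrad (c l) (H l) Y))
  calc _ = ∑ i, ∑ i', ∑ l, (quadGrad (c l) (H l) Y i * quadGrad (c l) (H l) Y i'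
          * K.starProjection (EuclideanSpace.single i' 1) i
        + quadPoly (c₀ l) (c l) (H l) Y
          * (H l i' i * K.starProjection (EuclideanSpace.single i' 1) i)) := by
        simp only [partialDeriv_partialDeriv_half_sum_sq hH, sum_mul]
        exact sum_congr rfl fun i _ => sum_congr rfl fun i' _ => sum_congr rfl fun l _ => by ring
    _ = ∑ i, ∑ l, ∑ i', _ := sum_congr rfl fun i _ => sum_comm
    _ = ∑ l, ∑ i, ∑ i', _ := sum_comm
    _ = _ := by simp only [sum_add_distrib, hrank, mul_sum]

end EuclideanProjection

section GraphCoordinates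

variable {k m : ℕ}

def spatialBlock (N : Matrix (Fin k) (Fin k) ℝ) : Matrix (Fin (k + m)) (Fin (k + m)) ℝ :=
  (Matrix.fromBlocks N 0 0 (0 : Matrix (Fin m) (Fin m) ℝ)).submatrix
    finSumFinEquiv.symm finSumFinEquiv.symm

noncomputable def graphResidual (a b : ℝ) (A : Fin k → ℝ) (N : Matrix (Fin k) (Fin k) ℝ)
    (l : Fin m) (t : ℝ) : (Fin (k + m) → ℝ) → ℝ :=
  quadPoly (-a - b * t) (Fin.append (-A) (Pi.single l 1)) (spatialBlock (-N))

variable (N : Matrix (Fin k) (Fin k) ℝ)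

@[simp] lemma spatialBlock_castAdd_castAdd (j j' : Fin k) :
    spatialBlock (m := m) N (Fin.castAdd m j) (Fin.castAdd m j') = N j j' := by
  simp [spatialBlock]

@[simp] lemma spatialBlock_natAdd_left (l : Fin m) (i : Fin (k + m)) :
    spatialBlock N (Fin.natAdd k l) i = 0 := by
  induction i using Fin.addCases <;> simp [spatialBlock]

@[simp] lemma spatialBlock_natAdd_right (i : Fin (k + m)) (l : Fin m) :
    spatialBlock N i (Fin.natAdd k l) = 0 := by
  induction i using Fin.addCases <;> simp [spatialBlock]

lemma Matrix.IsSymm.spatialBlock {N : Matrix (Fin k) (Fin k) ℝ} (hN : N.IsSymm) :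
    (spatialBlock (m := m) N).IsSymm :=
  (hN.fromBlocks (by simp) Matrix.isSymm_zero).submatrix _

lemma sub_quadratic_eq_graphResidual (a b t : ℝ) (A : Fin k → ℝ) (l : Fin m)
    (Y : Fin (k + m) → ℝ) :
    Y (Fin.natAdd k l) - (a + b * t + ∑ i, A i * Y (Fin.castAdd m i)
        + 1 / 2 * ∑ i, ∑ j, N i j * Y (Fin.castAdd m i) * Y (Fin.castAdd m j))
      = graphResidual a b A N l t Y := by
  simp [graphResidual, quadPoly, Fin.sum_univ_add, Pi.single_apply]
  ring

lemma quadGrad_append_single_spatialBlock (A : Fin k → ℝ) (l : Fin m) (Y : Fin (k + m) → ℝ) :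
    quadGrad (Fin.append (-A) (Pi.single l 1)) (spatialBlock (-N)) Y
      = -Fin.addCases (fun j => A j + ∑ j', N j j' * Y (Fin.castAdd m j'))
          (fun l' => if l' = l then -1 else 0) := by
  funext i
  induction i using Fin.addCases with
  | left j => simp [quadGrad, Fin.sum_univ_add]; ring
  | right l' => by_cases h : l' = l <;> simp [quadGrad, h]

lemma sum_sum_spatialBlock_mul_starProjection_single
    (K : Submodule ℝ (EuclideanSpace ℝ (Fin (k + m)))) :
    ∑ i, ∑ i', spatialBlock N i' i * K.starProjection (EuclideanSpace.single i' 1) i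
      = ∑ j, N j j - ∑ j, ∑ j', N j j'
          * ⟪Kᗮ.starProjection (EuclideanSpace.single (Fin.castAdd m j) 1),
            Kᗮ.starProjection (EuclideanSpace.single (Fin.castAdd m j') 1)⟫ := by
  simp only [Fin.sum_univ_add, spatialBlock_natAdd_left, spatialBlock_natAdd_right, zero_mul,
    sum_const_zero, add_zero, spatialBlock_castAdd_castAdd, starProjection_single_apply, mul_sub,
    sum_sub_distrib, mul_ite, mul_one, mul_zero, sum_ite_eq, mem_univ, if_true]
  rw [sum_comm (f := fun j j' => N j' j * _)]

section TangentVectors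

variable {j : Fin k} {D : Fin m → ℝ} {v : EuclideanSpace ℝ (Fin (k + m))}

lemma norm_single_sub_sq
    (hv : ∀ i, v i = Fin.addCases (fun j' => if j' = j then 1 else 0) D i) :
    ‖EuclideanSpace.single (Fin.castAdd m j) 1 - v‖ ^ 2 = ∑ l, D l ^ 2 := by
  simp [EuclideanSpace.real_norm_sq_eq, Fin.sum_univ_add, hv, PiLp.single_apply]
  refine sum_congr rfl fun l _ => ?_
  have : Fin.natAdd k l ≠ Fin.castAdd m j := by simp [Fin.ext_iff]; omega
  simp [this]

lemma norm_sq_eq_one_add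
    (hv : ∀ i, v i = Fin.addCases (fun j' => if j' = j then 1 else 0) D i) :
    ‖v‖ ^ 2 = 1 + ∑ l, D l ^ 2 := by
  simp [EuclideanSpace.real_norm_sq_eq, Fin.sum_univ_add, hv]

lemma inner_eq_sub {l : Fin m} {p : Fin k → ℝ} {w : EuclideanSpace ℝ (Fin (k + m))}
    (hv : ∀ i, v i = Fin.addCases (fun j' => if j' = j then 1 else 0) D i)
    (hw : ∀ i, w i = Fin.addCases p (fun l' => if l' = l then -1 else 0) i) :
    ⟪w, v⟫ = p j - D l := by
  simp [PiLp.inner_apply, Fin.sum_univ_add, hv, hw]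
  ring

lemma norm_sq_le_two {D : Fin m → Fin k → ℝ} (hD : ∑ l, ∑ j, D l j ^ 2 ≤ 1)
    (hv : ∀ i, v i = Fin.addCases (fun j' => if j' = j then 1 else 0) (fun l => D l j) i) :
    ‖v‖ ^ 2 ≤ 2 := by
  have hcol : ∑ l, D l j ^ 2 ≤ ∑ l, ∑ j', D l j' ^ 2 :=
    sum_le_sum fun l _ => single_le_sum (fun j' _ => sq_nonneg (D l j')) (mem_univ j)
  rw [norm_sq_eq_one_add hv]
  linarith

end TangentVectors

variable (K : Submodule ℝ (EuclideanSpace ℝ (Fin (k + m))))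

lemma deriv_sub_sum_sum_partialDeriv_mul_starProjection_eq {a b : Fin m → ℝ}
    {A : Fin m → Fin k → ℝ} {M : Fin m → Matrix (Fin k) (Fin k) ℝ} (hM : ∀ l, (M l).IsSymm)
    (hb : ∀ l, b l = ∑ i, M l i i) {Q : (Fin (k + m) → ℝ) → ℝ → ℝ}
    (hQ : ∀ Y τ, Q Y τ = 1 / 2 * ∑ l, graphResidual (a l) (b l) (A l) (M l) l τ Y ^ 2)
    (X : Fin (k + m) → ℝ) (t : ℝ) :
    deriv (fun τ => Q X τ) t - ∑ i, ∑ i', partialDeriv (partialDeriv (fun Y => Q Y t) i') i X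
        * K.starProjection (EuclideanSpace.single i' 1) i
      = -∑ l, ‖K.starProjection (WithLp.toLp 2
          (quadGrad (Fin.append (-A l) (Pi.single l 1)) (spatialBlock (-M l)) X))‖ ^ 2
        - ∑ l, graphResidual (a l) (b l) (A l) (M l) l t X * ∑ j, ∑ j', M l j j'
          * ⟪Kᗮ.starProjection (EuclideanSpace.single (Fin.castAdd m j) 1),
            Kᗮ.starProjection (EuclideanSpace.single (Fin.castAdd m j') 1)⟫ := by
  have hdt : deriv (fun τ => Q X τ) t
      = -∑ l, graphResidual (a l) (b l) (A l) (M l) l t X * b l := by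
    simp only [hQ, graphResidual]
    exact (hasDerivAt_half_sum_sq_quadPoly_sub (c₀ := fun l => -a l) b X t).deriv
  have hQt : (fun Y => Q Y t) = fun Y => 1 / 2 * ∑ l, quadPoly (-a l - b l * t)
      (Fin.append (-A l) (Pi.single l 1)) (spatialBlock (-M l)) Y ^ 2 :=
    funext fun Y => by simp only [hQ, graphResidual]
  rw [hdt, hQt, sum_sum_partialDeriv_mul_starProjection_single K
    (fun l => (hM l).neg.spatialBlock)]
  simp only [graphResidual, sum_sum_spatialBlock_mul_starProjection_single, Matrix.neg_apply,
    neg_mul, sum_neg_distrib, ← hb, neg_sub_neg, mul_sub, sum_sub_distrib]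
  ring

lemma sum_norm_sq_starProjection_orthogonal_single_le
    {f : Fin k → EuclideanSpace ℝ (Fin (k + m))} (hfK : ∀ j, f j ∈ K) {D : Fin m → Fin k → ℝ}
    (hf : ∀ j i, f j i = Fin.addCases (fun j' => if j' = j then 1 else 0) (fun l => D l j) i) :
    ∑ j, ‖Kᗮ.starProjection (EuclideanSpace.single (Fin.castAdd m j) 1)‖ ^ 2
      ≤ ∑ l, ∑ j, D l j ^ 2 := by
  rw [sum_comm]
  exact sum_le_sum fun j _ => (pow_le_pow_left₀ (norm_nonneg _)
    (norm_starProjection_orthogonal_le K (hfK j) _) 2).trans_eq (norm_single_sub_sq (hf j))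

lemma neg_sum_mul_sum_sum_mul_inner_orthogonal_single_le
    {f : Fin k → EuclideanSpace ℝ (Fin (k + m))} (hfK : ∀ j, f j ∈ K) {D : Fin m → Fin k → ℝ}
    (hf : ∀ j i, f j i = Fin.addCases (fun j' => if j' = j then 1 else 0) (fun l => D l j) i)
    {κ : Type*} [Fintype κ] (u : κ → ℝ) (N : κ → Fin k → Fin k → ℝ) :
    -∑ l, u l * ∑ j, ∑ j', N l j j'
        * ⟪Kᗮ.starProjection (EuclideanSpace.single (Fin.castAdd m j) 1),
          Kᗮ.starProjection (EuclideanSpace.single (Fin.castAdd m j') 1)⟫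
      ≤ √(∑ l, u l ^ 2) * (∑ l, ∑ j, D l j ^ 2) * √(∑ l, ∑ j, ∑ j', N l j j' ^ 2) := by
  refine (neg_le_abs _).trans ((abs_sum_mul_sum_sum_mul_inner_le _ _ _).trans ?_)
  rw [mul_right_comm]
  gcongr
  exact sum_norm_sq_starProjection_orthogonal_single_le K hfK hf

lemma inv_four_mul_sum_sum_sub_sq_le
    {f : Fin k → EuclideanSpace ℝ (Fin (k + m))} (hfK : ∀ j, f j ∈ K) {D : Fin m → Fin k → ℝ}
    (hD : ∑ l, ∑ j, D l j ^ 2 ≤ 1)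
    (hf : ∀ j i, f j i = Fin.addCases (fun j' => if j' = j then 1 else 0) (fun l => D l j) i)
    {p : Fin m → Fin k → ℝ} {v : Fin m → EuclideanSpace ℝ (Fin (k + m))}
    (hv : ∀ l i, v l i = Fin.addCases (p l) (fun l' => if l' = l then -1 else 0) i) :
    1 / (4 * k) * ∑ l, ∑ j, (D l j - p l j) ^ 2 ≤ 1 / 2 * ∑ l, ‖K.starProjection (v l)‖ ^ 2 := by
  have hinner : ∀ l j, (D l j - p l j) ^ 2 = ⟪v l, f j⟫ ^ 2 := fun l j => by
    rw [inner_eq_sub (hf j) (hv l)]; ring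
  simp only [hinner]
  exact inv_four_mul_sum_sum_inner_sq_le K hfK (fun j => norm_sq_le_two hD (hf j)) v

end GraphCoordinates

theorem Q_differential_inequality_general (k m : ℕ) :
    ∃ c₁ : ℝ, ∀ (f : (Fin k → ℝ) → ℝ → Fin m → ℝ)
      (Df : (Fin k → ℝ) → ℝ → Fin m → Fin k → ℝ),
      Continuous (fun p : (Fin k → ℝ) × ℝ => Df p.1 p.2) →
      (∀ (z : Fin k → ℝ) (t : ℝ), ∑ j, (z j) ^ 2 < 1 → t ∈ Set.Ioo (-1 : ℝ) 1 →
        ∀ (l : Fin m) (j : Fin k),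
          HasDerivAt (fun s => f (Function.update z j s) t l) (Df z t l j) (z j)) →
      (∀ (z : Fin k → ℝ) (t : ℝ), ∑ j, (z j) ^ 2 < 1 → t ∈ Set.Ioo (-1 : ℝ) 1 →
        ∑ l, ∑ j, (Df z t l j) ^ 2 ≤ 1) →
      ∀ (a b : Fin m → ℝ) (A : Fin m → Fin k → ℝ)
        (M : Fin m → Matrix (Fin k) (Fin k) ℝ),
      (∀ l, (M l).IsSymm) → (∀ l, b l = ∑ i, M l i i) →
      ∀ (g : Fin m → (Fin k → ℝ) → ℝ → ℝ),
      (∀ l y t, g l y t =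
        a l + b l * t + ∑ i, A l i * y i + (1 / 2) * ∑ i, ∑ j, M l i j * y i * y j) →
      ∀ (Q : (Fin (k + m) → ℝ) → ℝ → ℝ),
      (∀ x t, Q x t = (1 / 2) * ∑ l,
        (x (Fin.natAdd k l) - g l (fun j => x (Fin.castAdd m j)) t) ^ 2) →
      ∀ (x : Fin k → ℝ) (t : ℝ), ∑ j, (x j) ^ 2 < 1 → t ∈ Set.Ioo (-1 : ℝ) 1 →
      ∀ (X : Fin (k + m) → ℝ),
      (∀ i, X i = Fin.addCases (fun j => x j) (fun l => f x t l) i) →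
      ∀ (fvec : Fin k → EuclideanSpace ℝ (Fin (k + m))),
      (∀ j i, fvec j i = Fin.addCases (fun j' => if j' = j then (1:ℝ) else 0)
        (fun l => Df x t l j) i) →
      ∀ (gvec : Fin m → EuclideanSpace ℝ (Fin (k + m))),
      (∀ l i, gvec l i = Fin.addCases (fun j => A l j + ∑ j', M l j j' * x j')
        (fun l' => if l' = l then (-1:ℝ) else 0) i) →
      deriv (fun τ => Q X τ) t
        - ∑ i, ∑ i', (deriv (fun s => deriv
            (fun s' => Q (Function.update (Function.update X i s) i' s') t)
            ((Function.update X i s) i')) (X i))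
          * ((Submodule.orthogonalProjectionOnto (Submodule.span ℝ (Set.range fvec))
              (EuclideanSpace.single i' (1:ℝ)) : EuclideanSpace ℝ (Fin (k + m))) i)
      ≤ c₁ * Real.sqrt (Q X t) * (∑ l, ∑ j, (Df x t l j) ^ 2)
          * Real.sqrt (∑ l, ∑ i, ∑ j, (M l i j) ^ 2)
        - (1 / (4 * (k : ℝ))) * ∑ l, ∑ j,
            (Df x t l j - (A l j + ∑ j', M l j j' * x j')) ^ 2
        - (1 / 2) * ∑ l, ‖(Submodule.orthogonalProjectionOnto (Submodule.span ℝ (Set.range fvec))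
            (gvec l) : EuclideanSpace ℝ (Fin (k + m)))‖ ^ 2 := by
  refine ⟨√2, ?_⟩
  intro f Df _ _ hDf a b A M hM hb g hg Q hQ x t hx ht X hX fvec hfvec gvec hgvec
  set K := Submodule.span ℝ (Set.range fvec)
  have hfK : ∀ j, fvec j ∈ K := fun j => Submodule.subset_span ⟨j, rfl⟩
  have hQ' : ∀ Y τ, Q Y τ = 1 / 2 * ∑ l, graphResidual (a l) (b l) (A l) (M l) l τ Y ^ 2 :=
    fun Y τ => by simp only [hQ, hg, sub_quadratic_eq_graphResidual]
  have hgrad : ∀ l, WithLp.toLp 2 (quadGrad (Fin.append (-A l) (Pi.single l 1))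
      (spatialBlock (-M l)) X) = -gvec l := fun l => by
    ext i; simp [quadGrad_append_single_spatialBlock, hgvec, hX]
  have hu : √(∑ l, graphResidual (a l) (b l) (A l) (M l) l t X ^ 2) = √2 * √(Q X t) := by
    rw [← Real.sqrt_mul zero_le_two, hQ' X t]; congr 1; ring
  have hheat := deriv_sub_sum_sum_partialDeriv_mul_starProjection_eq K hM hb hQ' X t
  have hcurv := neg_sum_mul_sum_sum_mul_inner_orthogonal_single_le K hfK hfvec
    (fun l => graphResidual (a l) (b l) (A l) (M l) l t X) M
  have htilt := inv_four_mul_sum_sum_sub_sq_le K hfK (hDf x t hx ht) hfvec hgvec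
  simp only [partialDeriv, hgrad, map_neg, norm_neg] at hheat
  rw [hu] at hcurv
  simp only [Submodule.coe_orthogonalProjectionOnto_apply]
  linarith

/-- The key differential inequality for `Q_g`: there is `c₁ = c₁(n,k)` such that, for a
graph `f` with continuous spatial gradient, `|∇f| ≤ 1`, `g ∈ ℱ`, and `S` the tangent
plane of the graph of `f(·,t)`, evaluating at `(x, f(x,t))`:
`∂Q_g/∂t − S·∇²Q_g ≤ c₁ Q_g^{1/2} |∇f|² |∇²g| − (1/(4k))|∇f − ∇g|² − (1/2)Σ_l |S(𝐠_l)|²`. -/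
theorem Q_differential_inequality (k m : ℕ) (hk : 0 < k) (hm : 0 < m) :
    ∃ c₁ : ℝ, ∀ (f : (Fin k → ℝ) → ℝ → Fin m → ℝ)
      (Df : (Fin k → ℝ) → ℝ → Fin m → Fin k → ℝ),
      Continuous (fun p : (Fin k → ℝ) × ℝ => Df p.1 p.2) →
      (∀ (z : Fin k → ℝ) (t : ℝ), ∑ j, (z j) ^ 2 < 1 → t ∈ Set.Ioo (-1 : ℝ) 1 →
        ∀ (l : Fin m) (j : Fin k),
          HasDerivAt (fun s => f (Function.update z j s) t l) (Df z t l j) (z j)) →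
      (∀ (z : Fin k → ℝ) (t : ℝ), ∑ j, (z j) ^ 2 < 1 → t ∈ Set.Ioo (-1 : ℝ) 1 →
        ∑ l, ∑ j, (Df z t l j) ^ 2 ≤ 1) →
      ∀ (a b : Fin m → ℝ) (A : Fin m → Fin k → ℝ)
        (M : Fin m → Matrix (Fin k) (Fin k) ℝ),
      (∀ l, (M l).IsSymm) → (∀ l, b l = ∑ i, M l i i) →
      ∀ (g : Fin m → (Fin k → ℝ) → ℝ → ℝ),
      (∀ l y t, g l y t =
        a l + b l * t + ∑ i, A l i * y i + (1 / 2) * ∑ i, ∑ j, M l i j * y i * y j) →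
      ∀ (Q : (Fin (k + m) → ℝ) → ℝ → ℝ),
      (∀ x t, Q x t = (1 / 2) * ∑ l,
        (x (Fin.natAdd k l) - g l (fun j => x (Fin.castAdd m j)) t) ^ 2) →
      ∀ (x : Fin k → ℝ) (t : ℝ), ∑ j, (x j) ^ 2 < 1 → t ∈ Set.Ioo (-1 : ℝ) 1 →
      ∀ (X : Fin (k + m) → ℝ),
      (∀ i, X i = Fin.addCases (fun j => x j) (fun l => f x t l) i) →
      ∀ (fvec : Fin k → EuclideanSpace ℝ (Fin (k + m))),
      (∀ j i, fvec j i = Fin.addCases (fun j' => if j' = j then (1:ℝ) else 0)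
        (fun l => Df x t l j) i) →
      ∀ (gvec : Fin m → EuclideanSpace ℝ (Fin (k + m))),
      (∀ l i, gvec l i = Fin.addCases (fun j => A l j + ∑ j', M l j j' * x j')
        (fun l' => if l' = l then (-1:ℝ) else 0) i) →
      deriv (fun τ => Q X τ) t
        - ∑ i, ∑ i', (deriv (fun s => deriv
            (fun s' => Q (Function.update (Function.update X i s) i' s') t)
            ((Function.update X i s) i')) (X i))
          * ((Submodule.orthogonalProjectionOnto (Submodule.span ℝ (Set.range fvec))
              (EuclideanSpace.single i' (1:ℝ)) : EuclideanSpace ℝ (Fin (k + m))) i)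
      ≤ c₁ * Real.sqrt (Q X t) * (∑ l, ∑ j, (Df x t l j) ^ 2)
          * Real.sqrt (∑ l, ∑ i, ∑ j, (M l i j) ^ 2)
        - (1 / (4 * (k : ℝ))) * ∑ l, ∑ j,
            (Df x t l j - (A l j + ∑ j', M l j j' * x j')) ^ 2
        - (1 / 2) * ∑ l, ‖(Submodule.orthogonalProjectionOnto (Submodule.span ℝ (Set.range fvec))
            (gvec l) : EuclideanSpace ℝ (Fin (k + m)))‖ ^ 2 :=
  Q_differential_inequality_general k m
end
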